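/- arXiv:1904.02897 — 2 statements merged into one kernel-verified Lean document; each statement's English description precedes it below -/
import Mathlib

section
/- Let Ω be an ω-monoid with at least one nonzero element whose minimal generating set G(Ω) = Ω* \ (Ω* + Ω*) is finite. Then Ω is a tempered monoid if and only if G(Ω) is not commensurable, i.e., if and only if there exist nonzero λ, μ ∈ G(Ω) with λ/μ irrational. -/
/-!
If all minimal generators are rational multiples of the least one, finiteness gives them a common
measure `δ`; every element of `Ω` is a sum of minimal generators, so `Ω ⊆ ℤ δ` and all gaps are at
least `|δ|`. Conversely, if `l / m` is irrational then `ℤ l + ℤ m` is dense, so some difference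
`P - Q` of elements of `Ω` lies in `(0, ε)`. The sums `k P + (K - k) Q + j l` then meet every
interval of length `P - Q` far enough out, which forces the gaps below `ε`.
-/

open Filter Topology Pointwise Set

def minimalGenerators {M : Type*} [AddMonoid M] (Ω : Set M) : Set M :=
  (Ω \ {0}) \ ((Ω \ {0}) + (Ω \ {0}))

theorem exists_nat_mul_le_lt_add {v y : ℝ} (hv : 0 < v) (hy : 0 ≤ y) :
    ∃ j : ℕ, j * v ≤ y ∧ y < j * v + v := by
  refine ⟨⌊y / v⌋₊, ?_, ?_⟩
  · exact (le_div_iff₀ hv).1 (Nat.floor_le (div_nonneg hy hv.le))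
  · rw [← add_one_mul]
    exact (div_lt_iff₀ hv).1 (Nat.lt_floor_add_one _)

theorem exists_subset_zmultiples_of_not_irrational_div {G : Set ℝ} (hG : G.Finite) {x : ℝ}
    (hx : x ≠ 0) (h : ∀ g ∈ G, ¬Irrational (g / x)) :
    ∃ δ : ℝ, δ ≠ 0 ∧ G ⊆ AddSubgroup.zmultiples δ := by
  choose! q hq using fun g hg => not_not.1 (h g hg)
  set D := ∏ g ∈ hG.toFinset, (q g).den
  refine ⟨x / D, div_ne_zero hx (by positivity), fun g hg => ?_⟩
  obtain ⟨c, hc⟩ : (q g).den ∣ D := Finset.dvd_prod_of_mem _ (hG.mem_toFinset.2 hg)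
  refine ⟨(q g).num * c, ?_⟩
  have hc0 : (c : ℝ) ≠ 0 := by
    have : D ≠ 0 := by positivity
    exact_mod_cast right_ne_zero_of_mul (hc ▸ this)
  calc ((q g).num * c : ℤ) • (x / D) = (q g).num / (q g).den * x := by
        rw [zsmul_eq_mul, hc]
        push_cast
        field_simp
    _ = g := by rw [← Rat.cast_def, hq g hg, div_mul_cancel₀ _ hx]

theorem AddSubmonoid.exists_sub_mem_Ioo_of_irrational (S : AddSubmonoid ℝ) {l m : ℝ}
    (hl : l ∈ S) (hm : m ∈ S) (hirr : Irrational (l / m)) {ε : ℝ} (hε : 0 < ε) :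
    ∃ P ∈ S, ∃ Q ∈ S, P - Q ∈ Ioo 0 ε := by
  obtain ⟨t, ht, htε⟩ := (dense_addSubgroupClosure_pair_iff.2 hirr).exists_mem_open isOpen_Ioo
    (nonempty_Ioo.2 hε)
  obtain ⟨i, j, rfl⟩ := AddSubgroup.mem_closure_pair.1 ht
  refine ⟨i.toNat • l + j.toNat • m, add_mem (nsmul_mem hl _) (nsmul_mem hm _),
    (-i).toNat • l + (-j).toNat • m, add_mem (nsmul_mem hl _) (nsmul_mem hm _), ?_⟩
  have hsplit (n : ℤ) (y : ℝ) : n • y = n.toNat • y - (-n).toNat • y := by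
    rw [← natCast_zsmul, ← natCast_zsmul, ← sub_smul, Int.toNat_sub_toNat_neg]
  rw [hsplit i, hsplit j] at htε
  convert htε using 2
  abel

theorem AddSubmonoid.eventually_exists_mem_Ioc_sub (S : AddSubmonoid ℝ) {v P Q : ℝ}
    (hv : v ∈ S) (hv0 : 0 < v) (hP : P ∈ S) (hQ : Q ∈ S) (hQP : Q < P) :
    ∀ᶠ x in atTop, ∃ s ∈ S, s ∈ Ioc x (x + (P - Q)) := by
  set β := P - Q
  have hβ : 0 < β := sub_pos.2 hQP
  set K := ⌈v / β⌉₊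
  have hvK : v ≤ K * β := (div_le_iff₀ hβ).1 (Nat.le_ceil _)
  refine eventually_atTop.2 ⟨K * Q, fun x hx => ?_⟩
  obtain ⟨j, hj, hjv⟩ := exists_nat_mul_le_lt_add hv0 (sub_nonneg.2 hx)
  obtain ⟨i, hi, hiβ⟩ := exists_nat_mul_le_lt_add hβ (sub_nonneg.2 hj)
  -- `r := x - K Q - j v ∈ [0, v)` and `i β ≤ r < (i + 1) β`, so `i < K`
  obtain ⟨d, hd⟩ : ∃ d, K = i + 1 + d := by
    refine Nat.exists_eq_add_of_le (Nat.succ_le_of_lt ?_)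
    exact_mod_cast lt_of_mul_lt_mul_right (by linarith : (i : ℝ) * β < K * β) hβ.le
  have hs : (i + 1) • P + d • Q + j • v = x + ((i + 1) * β - (x - K * Q - j * v)) := by
    simp only [nsmul_eq_mul, β, hd]
    push_cast
    ring
  refine ⟨(i + 1) • P + d • Q + j • v, add_mem (add_mem (nsmul_mem hP _) (nsmul_mem hQ _))
    (nsmul_mem hv _), ?_, ?_⟩ <;> rw [hs] <;> linarith

namespace StrictMono

variable {a : ℕ → ℝ}

theorem apply_one_le_of_ne_zero (ha : StrictMono a) (h0 : a 0 = 0) {x : ℝ} (hx : x ∈ range a)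
    (hx0 : x ≠ 0) : a 1 ≤ x := by
  obtain ⟨i, rfl⟩ := hx
  exact ha.monotone (Nat.one_le_iff_ne_zero.2 fun hi => hx0 (hi ▸ h0))

theorem apply_one_pos (ha : StrictMono a) (h0 : a 0 = 0) : 0 < a 1 :=
  h0 ▸ ha zero_lt_one

theorem apply_one_mem_minimalGenerators (ha : StrictMono a) (h0 : a 0 = 0) :
    a 1 ∈ minimalGenerators (range a) := by
  refine ⟨⟨mem_range_self 1, (ha.apply_one_pos h0).ne'⟩, ?_⟩
  rintro ⟨x, ⟨hx, hx0⟩, y, ⟨hy, hy0⟩, hxy⟩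
  have := ha.apply_one_le_of_ne_zero h0 hx hx0
  have := ha.apply_one_le_of_ne_zero h0 hy hy0
  linarith [ha.apply_one_pos h0]

theorem range_subset_closure_minimalGenerators (ha : StrictMono a) (h0 : a 0 = 0) :
    range a ⊆ AddSubmonoid.closure (minimalGenerators (range a)) := by
  rintro _ ⟨n, rfl⟩
  induction n using Nat.strong_induction_on with
  | _ n ih =>
  rcases Nat.eq_zero_or_pos n with rfl | hn
  · exact h0 ▸ zero_mem _
  have han : a n ≠ 0 := h0 ▸ (ha hn).ne'
  by_cases hG : a n ∈ minimalGenerators (range a)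
  · exact AddSubmonoid.subset_closure hG
  obtain ⟨_, ⟨⟨i, rfl⟩, hi⟩, _, ⟨⟨j, rfl⟩, hj⟩, hij⟩ : a n ∈ (range a \ {0}) + (range a \ {0}) :=
    not_not.1 fun h => hG ⟨⟨mem_range_self n, han⟩, h⟩
  have hi0 := (ha.apply_one_pos h0).trans_le (ha.apply_one_le_of_ne_zero h0 ⟨i, rfl⟩ hi)
  have hj0 := (ha.apply_one_pos h0).trans_le (ha.apply_one_le_of_ne_zero h0 ⟨j, rfl⟩ hj)
  rw [← hij]
  exact add_mem (ih i (ha.lt_iff_lt.1 (by linarith))) (ih j (ha.lt_iff_lt.1 (by linarith)))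

theorem not_tendsto_sub_of_range_subset_zmultiples (ha : StrictMono a) {δ : ℝ} (hδ : δ ≠ 0)
    (h : range a ⊆ AddSubgroup.zmultiples δ) :
    ¬Tendsto (fun n => a (n + 1) - a n) atTop (𝓝 0) := by
  have hgap (n : ℕ) : |δ| ≤ a (n + 1) - a n := by
    obtain ⟨k, hk⟩ := sub_mem (h (mem_range_self (n + 1))) (h (mem_range_self n))
    have hpos : 0 < a (n + 1) - a n := sub_pos.2 (ha n.lt_succ_self)
    have hk0 : k ≠ 0 := by rintro rfl; simp only [zero_smul] at hk; linarith
    rw [← abs_of_pos hpos, ← hk, abs_zsmul]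
    exact le_smul_of_one_le_left (abs_nonneg δ) (Int.one_le_abs hk0)
  exact fun htend => (abs_pos.2 hδ).not_ge (ge_of_tendsto' htend hgap)

theorem tendsto_sub_of_eventually_exists_mem_Ioc (ha : StrictMono a)
    (htop : Tendsto a atTop atTop)
    (h : ∀ ε > 0, ∀ᶠ x in atTop, ∃ s ∈ range a, s ∈ Ioc x (x + ε)) :
    Tendsto (fun n => a (n + 1) - a n) atTop (𝓝 0) := by
  refine tendsto_order.2 ⟨fun b hb => Eventually.of_forall fun n =>
    hb.trans (sub_pos.2 (ha n.lt_succ_self)), fun ε hε => ?_⟩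
  filter_upwards [htop.eventually (h (ε / 2) (half_pos hε))] with n ⟨_, ⟨m, rfl⟩, hnm, hmε⟩
  have := ha.monotone (ha.lt_iff_lt.1 hnm : n < m)
  linarith

end StrictMono

theorem finite_minimal_generating_set_tempered_iff_not_commensurable_general
    (Ω : Set ℝ) (a : ℕ → ℝ)
    (hadd : ∀ x ∈ Ω, ∀ y ∈ Ω, x + y ∈ Ω)
    (hmono : StrictMono a) (h0 : a 0 = 0) (hrange : Set.range a = Ω)
    (hfin : ((Ω \ {0}) \ ((Ω \ {0}) + (Ω \ {0}))).Finite) :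
    Tendsto (fun n => a (n + 1) - a n) atTop (𝓝 0) ↔
      ∃ l ∈ (Ω \ {0}) \ ((Ω \ {0}) + (Ω \ {0})),
        ∃ m ∈ (Ω \ {0}) \ ((Ω \ {0}) + (Ω \ {0})),
          l ≠ 0 ∧ m ≠ 0 ∧ Irrational (l / m) := by
  subst hrange
  let S : AddSubmonoid ℝ := ⟨⟨range a, fun {x y} hx hy => hadd x hx y hy⟩, ⟨0, h0⟩⟩
  have ha1 := hmono.apply_one_mem_minimalGenerators h0
  constructor
  · intro htend
    by_contra! hcomm
    obtain ⟨δ, hδ, hG⟩ := exists_subset_zmultiples_of_not_irrational_div hfin ha1.1.2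
      fun g hg => hcomm g hg (a 1) ha1 hg.1.2 ha1.1.2
    exact hmono.not_tendsto_sub_of_range_subset_zmultiples hδ
      ((hmono.range_subset_closure_minimalGenerators h0).trans (AddSubmonoid.closure_le.2 hG)) htend
  · rintro ⟨l, ⟨⟨hl, hl0⟩, -⟩, m, ⟨⟨hm, -⟩, -⟩, -, -, hirr⟩
    have hlpos := (hmono.apply_one_pos h0).trans_le (hmono.apply_one_le_of_ne_zero h0 hl hl0)
    have htop : Tendsto a atTop atTop := tendsto_atTop_atTop_of_monotone hmono.monotone fun b =>
      let ⟨k, hk⟩ := Archimedean.arch b hlpos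
      let ⟨n, hn⟩ := nsmul_mem (show l ∈ S from hl) k
      ⟨n, hn ▸ hk⟩
    refine hmono.tendsto_sub_of_eventually_exists_mem_Ioc htop fun ε hε => ?_
    obtain ⟨P, hP, Q, hQ, hPQ, hPQε⟩ := S.exists_sub_mem_Ioo_of_irrational hl hm hirr hε
    filter_upwards [S.eventually_exists_mem_Ioc_sub hl hlpos hP hQ (sub_pos.1 hPQ)]
      with x ⟨s, hs, hxs, hsx⟩
    exact ⟨s, hs, hxs, by linarith⟩

/-- An ω-monoid with finite minimal generating set is a tempered monoid iff its minimal
generating set is not commensurable. -/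
theorem finite_minimal_generating_set_tempered_iff_not_commensurable
    (Ω : Set ℝ) (a : ℕ → ℝ)
    (hadd : ∀ x ∈ Ω, ∀ y ∈ Ω, x + y ∈ Ω)
    (hmono : StrictMono a) (h0 : a 0 = 0) (hrange : Set.range a = Ω)
    (hne : ∃ x ∈ Ω, x ≠ 0)
    (hfin : ((Ω \ {0}) \ ((Ω \ {0}) + (Ω \ {0}))).Finite) :
    Tendsto (fun n => a (n + 1) - a n) atTop (𝓝 0) ↔
      ∃ l ∈ (Ω \ {0}) \ ((Ω \ {0}) + (Ω \ {0})),
        ∃ m ∈ (Ω \ {0}) \ ((Ω \ {0}) + (Ω \ {0})),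
          l ≠ 0 ∧ m ≠ 0 ∧ Irrational (l / m) :=
  finite_minimal_generating_set_tempered_iff_not_commensurable_general Ω a hadd hmono h0 hrange hfin
end

section
/- Let Ω be a normalized ω-monoid (smallest nonzero element equal to 1) that is not a tempered monoid. Then there exists a positive integer k such that the footprint of Ω equals {j/k : j = 0, 1, …, k − 1}; in particular Ω ⊆ {n/k : n ∈ ℕ}. -/
open Filter Topology Set

/-!
Write `Δ` for the footprint. If `Δ` is infinite, it contains two points closer than any `ε`;
lifting them to `p < q` in `Ω` with `q - p < ε`, the sums `(K - j) p + j q + t` (`j ≤ K`,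
`t ∈ ℕ`, `K (q - p) ≥ 1`) form an `ε`-net of a half-line inside `Ω`, so the gaps of `Ω` tend
to `0`. Hence `Δ` is finite. Then every element of `Ω` has finite order modulo `1`, so `Ω + ℤ`
is an additive subgroup of `ℝ` meeting `[0, 1)` in the finite set `Δ`; being discrete and
containing `1`, it is `(1/k) ℤ`.
-/

theorem AddSubmonoid.natCast_mem_of_one_mem {R : Type*} [AddMonoidWithOne R] {M : AddSubmonoid R}
    (h1 : (1 : R) ∈ M) (n : ℕ) : (n : R) ∈ M := by
  simpa using nsmul_mem h1 n

section Fract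

variable {R : Type*} [Ring R] [LinearOrder R] [IsStrictOrderedRing R] [FloorRing R]

theorem Int.fract_add_congr {x y u v : R} (hx : Int.fract x = Int.fract u)
    (hy : Int.fract y = Int.fract v) : Int.fract (x + y) = Int.fract (u + v) := by
  obtain ⟨m, hm⟩ := Int.fract_eq_fract.1 hx
  obtain ⟨n, hn⟩ := Int.fract_eq_fract.1 hy
  exact Int.fract_eq_fract.2 ⟨m + n, by push_cast; rw [← hm, ← hn]; abel⟩

theorem Int.fract_neg_congr {x u : R} (h : Int.fract x = Int.fract u) :
    Int.fract (-x) = Int.fract (-u) := by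
  obtain ⟨m, hm⟩ := Int.fract_eq_fract.1 h
  exact Int.fract_eq_fract.2 ⟨-m, by push_cast; rw [← hm]; abel⟩

end Fract

theorem Set.Infinite.exists_lt_lt_add_of_subset_Icc {S : Set ℝ} (hS : S.Infinite) {a b : ℝ}
    (hab : S ⊆ Icc a b) {ε : ℝ} (hε : 0 < ε) : ∃ x ∈ S, ∃ y ∈ S, x < y ∧ y < x + ε := by
  have hmaps : MapsTo (fun x => ⌊x / ε⌋) S (Icc ⌊a / ε⌋ ⌊b / ε⌋) := fun x hx =>
    ⟨Int.floor_mono (by gcongr; exact (hab hx).1), Int.floor_mono (by gcongr; exact (hab hx).2)⟩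
  obtain ⟨x, hx, y, hy, hne, hxy⟩ := hS.exists_ne_map_eq_of_mapsTo hmaps (finite_Icc _ _)
  have hclose : |x - y| < ε := by
    have := Int.abs_sub_lt_one_of_floor_eq_floor hxy
    rwa [← sub_div, abs_div, abs_of_pos hε, div_lt_one hε] at this
  obtain ⟨h₁, h₂⟩ := abs_lt.1 hclose
  rcases hne.lt_or_gt with h | h
  · exact ⟨x, hx, y, hy, h, by linarith⟩
  · exact ⟨y, hy, x, hx, h, by linarith⟩

theorem StrictMono.eventually_sub_le {a : ℕ → ℝ} (ha : StrictMono a) {B d : ℝ}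
    (h : ∀ w ≥ B, ∃ x ∈ range a, x ∈ Ioc w (w + d)) : ∀ᶠ n in atTop, a (n + 1) - a n ≤ d := by
  obtain ⟨_, ⟨m, rfl⟩, hm, -⟩ := h B le_rfl
  filter_upwards [eventually_ge_atTop m] with n hn
  obtain ⟨_, ⟨l, rfl⟩, hl, hl'⟩ := h (a n) (hm.le.trans (ha.monotone hn))
  linarith [ha.monotone (ha.lt_iff_lt.1 hl : n + 1 ≤ l)]

namespace AddSubmonoid

variable (M : AddSubmonoid ℝ)

theorem exists_lt_lt_add_of_fract_image_infinite (h1 : (1 : ℝ) ∈ M) (hM : ∀ x ∈ M, 0 ≤ x)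
    (hinf : (Int.fract '' (M : Set ℝ)).Infinite) {ε : ℝ} (hε : 0 < ε) :
    ∃ p ∈ M, ∃ q ∈ M, p < q ∧ q < p + ε := by
  have hsub : Int.fract '' (M : Set ℝ) ⊆ Icc 0 1 := by
    rintro _ ⟨w, -, rfl⟩
    exact ⟨Int.fract_nonneg w, (Int.fract_lt_one w).le⟩
  obtain ⟨_, ⟨u, hu, rfl⟩, _, ⟨v, hv, rfl⟩, hlt, hclose⟩ :=
    hinf.exists_lt_lt_add_of_subset_Icc hsub hε
  have hfract : ∀ w ∈ M, Int.fract w = w - ⌊w⌋₊ := fun w hw => by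
    rw [natCast_floor_eq_intCast_floor (hM w hw), Int.fract]
  -- `u + ⌊v⌋₊` and `v + ⌊u⌋₊` have the same integer part and fractional parts `fract u`, `fract v`
  refine ⟨u + ⌊v⌋₊, add_mem hu (natCast_mem_of_one_mem h1 _),
    v + ⌊u⌋₊, add_mem hv (natCast_mem_of_one_mem h1 _), ?_, ?_⟩ <;>
  · rw [hfract u hu, hfract v hv] at *
    linarith

theorem exists_forall_ge_exists_mem_Ioc (h1 : (1 : ℝ) ∈ M) {p q : ℝ} (hp : p ∈ M) (hq : q ∈ M)
    (hpq : p < q) : ∃ B, ∀ w ≥ B, ∃ x ∈ M, x ∈ Ioc w (w + (q - p)) := by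
  set d := q - p
  have hd : 0 < d := sub_pos.2 hpq
  set K := ⌈d⁻¹⌉₊
  refine ⟨K * p, fun w hw => ?_⟩
  set t := ⌊w - K * p⌋₊
  set r := w - K * p - t
  have hr₀ : 0 ≤ r := sub_nonneg.2 (Nat.floor_le (sub_nonneg.2 hw))
  have hr₁ : r < 1 := by linarith [Nat.lt_floor_add_one (w - K * p)]
  set j := ⌊r / d⌋₊ + 1
  have hjK : j ≤ K := by
    refine (Nat.floor_lt (by positivity)).2 ?_
    calc r / d < d⁻¹ := by rw [div_lt_iff₀ hd, inv_mul_cancel₀ hd.ne']; exact hr₁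
      _ ≤ K := Nat.le_ceil _
  have hjd : r < j * d ∧ j * d ≤ r + d := by
    have hlo := Nat.floor_le (div_nonneg hr₀ hd.le)
    have hhi := Nat.lt_floor_add_one (r / d)
    rw [le_div_iff₀ hd] at hlo
    rw [div_lt_iff₀ hd] at hhi
    push_cast [j]
    constructor <;> linarith
  refine ⟨(K - j) • p + j • q + t • 1,
    add_mem (add_mem (nsmul_mem hp _) (nsmul_mem hq _)) (nsmul_mem h1 _), ?_⟩
  have hx : (K - j) • p + j • q + t • (1 : ℝ) = w + (j * d - r) := by
    simp only [nsmul_eq_mul, Nat.cast_sub hjK, mul_one, r, d]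
    ring
  rw [hx]
  exact ⟨by linarith [hjd.1], by linarith [hjd.2]⟩

theorem tendsto_sub_of_fract_image_infinite (h1 : (1 : ℝ) ∈ M) (hM : ∀ x ∈ M, 0 ≤ x)
    {a : ℕ → ℝ} (ha : StrictMono a) (hrange : range a = M)
    (hinf : (Int.fract '' (M : Set ℝ)).Infinite) :
    Tendsto (fun n => a (n + 1) - a n) atTop (𝓝 0) := by
  refine tendsto_order.2 ⟨fun c hc => Eventually.of_forall fun n =>
    hc.trans (sub_pos.2 (ha n.lt_succ_self)), fun c hc => ?_⟩
  obtain ⟨p, hp, q, hq, hpq, hqc⟩ := M.exists_lt_lt_add_of_fract_image_infinite h1 hM hinf hc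
  obtain ⟨B, hB⟩ := M.exists_forall_ge_exists_mem_Ioc h1 hp hq hpq
  have hcover : ∀ w ≥ B, ∃ x ∈ range a, x ∈ Ioc w (w + (q - p)) := by rwa [hrange]
  exact (ha.eventually_sub_le hcover).mono fun n hn => hn.trans_lt (by linarith)

variable {M}

-- pigeonhole: `fract (m • u) = fract (n • u)` for some `m < n`, so `(n - m) • u ∈ ℤ`
theorem exists_fract_eq_fract_neg (hfin : (Int.fract '' (M : Set ℝ)).Finite) {u : ℝ}
    (hu : u ∈ M) : ∃ v ∈ M, Int.fract v = Int.fract (-u) := by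
  obtain ⟨m, -, n, -, hne, hmn⟩ := infinite_univ.exists_ne_map_eq_of_mapsTo
    (f := fun n : ℕ => Int.fract (n • u)) (fun n _ => mem_image_of_mem _ (nsmul_mem hu n)) hfin
  wlog hlt : m < n generalizing m n
  · exact this n m hne.symm hmn.symm (by omega)
  obtain ⟨z, hz⟩ := Int.fract_eq_fract.1 hmn.symm
  refine ⟨(n - m - 1) • u, nsmul_mem hu _, Int.fract_eq_fract.2 ⟨z, ?_⟩⟩
  rw [← hz]
  simp only [nsmul_eq_mul, Nat.cast_sub (by omega : 1 ≤ n - m), Nat.cast_sub hlt.le]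
  ring

/-- `M + ℤ`. -/
def fractSaturation (hfin : (Int.fract '' (M : Set ℝ)).Finite) : AddSubgroup ℝ where
  carrier := Int.fract ⁻¹' (Int.fract '' M)
  zero_mem' := ⟨0, M.zero_mem, rfl⟩
  add_mem' := by
    rintro x y ⟨u, hu, hxu⟩ ⟨v, hv, hyv⟩
    exact ⟨u + v, add_mem hu hv, Int.fract_add_congr hxu hyv⟩
  neg_mem' := by
    rintro x ⟨u, hu, hxu⟩
    obtain ⟨v, hv, hvu⟩ := exists_fract_eq_fract_neg hfin hu
    exact ⟨v, hv, hvu.trans (Int.fract_neg_congr hxu)⟩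

variable (hfin : (Int.fract '' (M : Set ℝ)).Finite)

theorem mem_fractSaturation_of_mem {x : ℝ} (hx : x ∈ M) : x ∈ M.fractSaturation hfin :=
  ⟨x, hx, rfl⟩

theorem intCast_mem_fractSaturation (z : ℤ) : (z : ℝ) ∈ M.fractSaturation hfin :=
  ⟨0, M.zero_mem, by simp⟩

theorem fract_image_eq_fractSaturation_inter_Ico :
    Int.fract '' (M : Set ℝ) = (M.fractSaturation hfin : Set ℝ) ∩ Ico 0 1 := by
  ext x
  constructor
  · rintro ⟨u, hu, rfl⟩
    exact ⟨⟨u, hu, (Int.fract_fract u).symm⟩, Int.fract_nonneg u, Int.fract_lt_one u⟩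
  · rintro ⟨hx, hx₀, hx₁⟩
    rwa [← Int.fract_eq_self.2 ⟨hx₀, hx₁⟩]

end AddSubmonoid

theorem AddSubgroup.exists_eq_zmultiples_inv_natCast {G : AddSubgroup ℝ} (h1 : (1 : ℝ) ∈ G)
    (hfin : ((G : Set ℝ) ∩ Ico 0 1).Finite) :
    ∃ k : ℕ, 0 < k ∧ G = zmultiples ((k : ℝ)⁻¹) := by
  have hfin_Ioc : {g | g ∈ G ∧ 0 < g ∧ g ≤ 1}.Finite := by
    refine (hfin.union (finite_singleton 1)).subset ?_
    rintro g ⟨hg, hg₀, hg₁⟩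
    rcases hg₁.lt_or_eq with hg₁ | rfl
    · exact Or.inl ⟨hg, hg₀.le, hg₁⟩
    · exact Or.inr rfl
  obtain ⟨δ, ⟨hδ, hδ₀, hδ₁⟩, hδmin⟩ := exists_min_image _ id hfin_Ioc ⟨1, h1, one_pos, le_rfl⟩
  have hleast : IsLeast {g | g ∈ G ∧ 0 < g} δ := by
    refine ⟨⟨hδ, hδ₀⟩, fun g ⟨hg, hg₀⟩ => ?_⟩
    rcases le_total g 1 with hg₁ | hg₁
    · exact hδmin g ⟨hg, hg₀, hg₁⟩
    · exact hδ₁.trans hg₁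
  have hG : G = zmultiples δ := by
    rw [zmultiples_eq_closure]
    exact cyclic_of_min hleast
  obtain ⟨n, hn⟩ := mem_zmultiples_iff.1 (hG ▸ h1)
  rw [zsmul_eq_mul] at hn
  have hn₀ : 0 < n := by
    have : (0 : ℝ) < n := pos_of_mul_pos_left (hn ▸ one_pos) hδ₀.le
    exact_mod_cast this
  lift n to ℕ using hn₀.le
  refine ⟨n, by exact_mod_cast hn₀, ?_⟩
  push_cast at hn
  rw [hG, eq_inv_of_mul_eq_one_right hn]

theorem exists_nat_eq_div_of_mem_zmultiples_inv {k : ℕ} (hk : 0 < k) {x : ℝ}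
    (hx : x ∈ AddSubgroup.zmultiples ((k : ℝ)⁻¹)) (hx₀ : 0 ≤ x) : ∃ n : ℕ, x = n / k := by
  obtain ⟨z, rfl⟩ := AddSubgroup.mem_zmultiples_iff.1 hx
  rw [zsmul_eq_mul] at hx₀ ⊢
  have hz : 0 ≤ z := by
    have : (0 : ℝ) ≤ z := nonneg_of_mul_nonneg_left hx₀ (by positivity)
    exact_mod_cast this
  lift z to ℕ using hz
  exact ⟨z, by push_cast; rw [div_eq_mul_inv]⟩

theorem zmultiples_inv_natCast_inter_Ico {k : ℕ} (hk : 0 < k) :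
    (AddSubgroup.zmultiples ((k : ℝ)⁻¹) : Set ℝ) ∩ Ico 0 1 =
      {x : ℝ | ∃ j : ℕ, j < k ∧ x = (j : ℝ) / (k : ℝ)} := by
  have hk' : (0 : ℝ) < k := by exact_mod_cast hk
  ext x
  constructor
  · rintro ⟨hx, hx₀, hx₁⟩
    obtain ⟨n, rfl⟩ := exists_nat_eq_div_of_mem_zmultiples_inv hk hx hx₀
    exact ⟨n, by exact_mod_cast (div_lt_one hk').1 hx₁, rfl⟩
  · rintro ⟨j, hj, rfl⟩
    refine ⟨AddSubgroup.mem_zmultiples_iff.2 ⟨j, ?_⟩, by positivity, ?_⟩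
    · rw [zsmul_eq_mul, div_eq_mul_inv]
      push_cast
      rfl
    · exact (div_lt_one hk').2 (by exact_mod_cast hj)

theorem footprint_of_not_tempered_is_cyclic_general
    (Ω : Set ℝ) (a : ℕ → ℝ)
    (hadd : ∀ x ∈ Ω, ∀ y ∈ Ω, x + y ∈ Ω)
    (hmono : StrictMono a) (h0 : a 0 = 0) (hrange : Set.range a = Ω)
    (hone : 1 ∈ Ω)
    (hnt : ¬ Tendsto (fun n => a (n + 1) - a n) atTop (𝓝 0)) :
    ∃ k : ℕ, 0 < k ∧
      Int.fract '' Ω = {x : ℝ | ∃ j : ℕ, j < k ∧ x = (j : ℝ) / (k : ℝ)} ∧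
      Ω ⊆ {x : ℝ | ∃ n : ℕ, x = (n : ℝ) / (k : ℝ)} := by
  let M : AddSubmonoid ℝ :=
    { carrier := Ω, add_mem' := fun hx hy => hadd _ hx _ hy, zero_mem' := hrange ▸ ⟨0, h0⟩ }
  have hnonneg : ∀ x ∈ Ω, 0 ≤ x := by
    rintro _ hx
    obtain ⟨n, rfl⟩ := hrange ▸ hx
    exact h0 ▸ hmono.monotone n.zero_le
  have hfin : (Int.fract '' (M : Set ℝ)).Finite :=
    not_infinite.1 fun hinf => hnt (M.tendsto_sub_of_fract_image_infinite hone hnonneg hmono hrange hinf)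
  have hfootprint := M.fract_image_eq_fractSaturation_inter_Ico hfin
  obtain ⟨k, hk, hG⟩ := AddSubgroup.exists_eq_zmultiples_inv_natCast
    (by exact_mod_cast M.intCast_mem_fractSaturation hfin 1) (hfootprint ▸ hfin)
  refine ⟨k, hk, ?_, fun x hx => ?_⟩
  · rw [show Ω = M from rfl, hfootprint, hG, zmultiples_inv_natCast_inter_Ico hk]
  · exact exists_nat_eq_div_of_mem_zmultiples_inv hk
      (hG ▸ M.mem_fractSaturation_of_mem hfin hx) (hnonneg x hx)

/-- The footprint of a normalized non-tempered ω-monoid is `{0, 1/k, …, (k-1)/k}` for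
some positive integer `k`; in particular the monoid is contained in `(1/k)·ℕ`. -/
theorem footprint_of_not_tempered_is_cyclic
    (Ω : Set ℝ) (a : ℕ → ℝ)
    (hadd : ∀ x ∈ Ω, ∀ y ∈ Ω, x + y ∈ Ω)
    (hmono : StrictMono a) (h0 : a 0 = 0) (hrange : Set.range a = Ω)
    (hone : 1 ∈ Ω) (hnorm : ∀ x ∈ Ω, x ≠ 0 → 1 ≤ x)
    (hnt : ¬ Tendsto (fun n => a (n + 1) - a n) atTop (𝓝 0)) :
    ∃ k : ℕ, 0 < k ∧
      Int.fract '' Ω = {x : ℝ | ∃ j : ℕ, j < k ∧ x = (j : ℝ) / (k : ℝ)} ∧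
      Ω ⊆ {x : ℝ | ∃ n : ℕ, x = (n : ℝ) / (k : ℝ)} :=
  footprint_of_not_tempered_is_cyclic_general Ω a hadd hmono h0 hrange hone hnt
end
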